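/- Let D⁰ > 0 and let N⁰, D¹ be symmetric real 2×2 matrices. If u : ℝ² × ℝ → ℝ is infinitely differentiable, u(·,t) is supported in a fixed compact subset of ℝ² for all t, and u satisfies the two-dimensional homogenized equation −D⁰ ∂ₜ²u + D¹ᵢⱼ ∂ᵢ∂ⱼ∂ₜ²u + N⁰ᵢⱼ ∂ᵢ∂ⱼu = 0 everywhere, then the energy E(t) = (1/2) ∫_{ℝ²} ( D⁰ |∂ₜu|² + N⁰ᵢⱼ ∂ᵢu ∂ⱼu + D¹ᵢⱼ ∂ᵢ∂ₜu ∂ⱼ∂ₜu ) dx is constant in t. -/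

import Mathlib

open MeasureTheory Filter

/-- Partial derivative in the `i`-th spatial coordinate. -/
noncomputable def pd (i : Fin 2) (u : (Fin 2 → ℝ) → ℝ → ℝ) : (Fin 2 → ℝ) → ℝ → ℝ :=
  fun x t => fderiv ℝ (fun y => u y t) x (Pi.single i 1)

/-- Partial derivative in the time variable. -/
noncomputable def pdt (u : (Fin 2 → ℝ) → ℝ → ℝ) : (Fin 2 → ℝ) → ℝ → ℝ :=
  fun x t => deriv (fun s => u x s) t

/-- Directional derivative in space-time. -/
noncomputable def Dd (e : (Fin 2 → ℝ) × ℝ) (F : (Fin 2 → ℝ) × ℝ → ℝ) : (Fin 2 → ℝ) × ℝ → ℝ :=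
  fun p => fderiv ℝ F p e

/-- Spatial direction. -/
noncomputable def eS (i : Fin 2) : (Fin 2 → ℝ) × ℝ := (Pi.single i 1, 0)

/-- Time direction. -/
noncomputable def eT : (Fin 2 → ℝ) × ℝ := (0, 1)

lemma Dd_contDiff {F : (Fin 2 → ℝ) × ℝ → ℝ} (hF : ContDiff ℝ (⊤ : ℕ∞) F) (e : (Fin 2 → ℝ) × ℝ) :
    ContDiff ℝ (⊤ : ℕ∞) (Dd e F) :=
  (hF.fderiv_right (by simp)).clm_apply contDiff_const

lemma Dd_zero_off {K : Set (Fin 2 → ℝ)} (hK : IsCompact K) {F : (Fin 2 → ℝ) × ℝ → ℝ}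
    (h0 : ∀ p : (Fin 2 → ℝ) × ℝ, p.1 ∉ K → F p = 0) (e : (Fin 2 → ℝ) × ℝ) :
    ∀ p : (Fin 2 → ℝ) × ℝ, p.1 ∉ K → Dd e F p = 0 := by
  intro p hp
  have hU : IsOpen {q : (Fin 2 → ℝ) × ℝ | q.1 ∉ K} := by
    have : IsOpen (Kᶜ) := hK.isClosed.isOpen_compl
    exact this.preimage continuous_fst
  have : fderiv ℝ F p = fderiv ℝ (fun _ => (0:ℝ)) p :=
    Filter.EventuallyEq.fderiv_eq
      (Filter.eventuallyEq_of_mem (hU.mem_nhds hp) (fun q hq => h0 q hq))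
  simp [Dd, this]

lemma fderiv_slice {F : (Fin 2 → ℝ) × ℝ → ℝ} (hF : ContDiff ℝ (⊤ : ℕ∞) F) (x : Fin 2 → ℝ) (t : ℝ)
    (v : Fin 2 → ℝ) : fderiv ℝ (fun y => F (y, t)) x v = fderiv ℝ F (x, t) (v, 0) := by
  have h : HasFDerivAt (fun y => F (y, t))
      ((fderiv ℝ F (x, t)).comp (ContinuousLinearMap.inl ℝ (Fin 2 → ℝ) ℝ)) x :=
    ((hF.differentiable (by simp) (x, t)).hasFDerivAt).comp x (hasFDerivAt_prodMk_left x t)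
  rw [h.fderiv]
  simp

lemma pd_curry (i : Fin 2) {F : (Fin 2 → ℝ) × ℝ → ℝ} (hF : ContDiff ℝ (⊤ : ℕ∞) F) :
    pd i (fun x t => F (x, t)) = fun x t => Dd (eS i) F (x, t) := by
  funext x t
  simp only [pd, Dd, eS]
  exact fderiv_slice hF x t _

lemma hasDerivAt_slice {F : (Fin 2 → ℝ) × ℝ → ℝ} (hF : ContDiff ℝ (⊤ : ℕ∞) F) (x : Fin 2 → ℝ) (t : ℝ) :
    HasDerivAt (fun s => F (x, s)) (Dd eT F (x, t)) t := by
  have h0 : HasFDerivAt (fun s => F (x, s))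
      ((fderiv ℝ F (x, t)).comp (ContinuousLinearMap.inr ℝ (Fin 2 → ℝ) ℝ)) t :=
    ((hF.differentiable (by simp) (x, t)).hasFDerivAt).comp t (hasFDerivAt_prodMk_right x t)
  have h := h0.hasDerivAt
  simpa [Dd, eT] using h

lemma pdt_curry {F : (Fin 2 → ℝ) × ℝ → ℝ} (hF : ContDiff ℝ (⊤ : ℕ∞) F) :
    pdt (fun x t => F (x, t)) = fun x t => Dd eT F (x, t) := by
  funext x t
  exact (hasDerivAt_slice hF x t).deriv

lemma Dd_comm {F : (Fin 2 → ℝ) × ℝ → ℝ} (hF : ContDiff ℝ (⊤ : ℕ∞) F) (e e' : (Fin 2 → ℝ) × ℝ) :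
    Dd e (Dd e' F) = Dd e' (Dd e F) := by
  funext p
  have hA : HasFDerivAt (fderiv ℝ F) (fderiv ℝ (fderiv ℝ F) p) p :=
    (((hF.fderiv_right (m := (⊤ : ℕ∞)) (by simp)).differentiable (by simp)) p).hasFDerivAt
  have key := second_derivative_symmetric
    (fun y => (hF.differentiable (by simp) y).hasFDerivAt) hA
  have hev : ∀ w d : (Fin 2 → ℝ) × ℝ, fderiv ℝ (Dd w F) p d = fderiv ℝ (fderiv ℝ F) p d w := by
    intro w d
    have h2 : HasFDerivAt (Dd w F)
        ((ContinuousLinearMap.apply ℝ ℝ w).comp (fderiv ℝ (fderiv ℝ F) p)) p :=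
      ((ContinuousLinearMap.apply ℝ ℝ w).hasFDerivAt).comp p hA
    rw [h2.fderiv]; rfl
  show fderiv ℝ (Dd e' F) p e = fderiv ℝ (Dd e F) p e'
  rw [hev, hev, key]

lemma integrable_slice {K : Set (Fin 2 → ℝ)} (hK : IsCompact K) {G : (Fin 2 → ℝ) × ℝ → ℝ}
    (hG : Continuous G) (h0 : ∀ p : (Fin 2 → ℝ) × ℝ, p.1 ∉ K → G p = 0) (t : ℝ) :
    Integrable (fun x => G (x, t)) := by
  refine (hG.comp (continuous_id.prodMk continuous_const)).integrable_of_hasCompactSupport ?_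
  exact HasCompactSupport.intro hK fun x hx => h0 (x, t) hx

lemma int2 {K : Set (Fin 2 → ℝ)} (hK : IsCompact K) {G H : (Fin 2 → ℝ) × ℝ → ℝ}
    (hG : ContDiff ℝ (⊤ : ℕ∞) G) (hH : ContDiff ℝ (⊤ : ℕ∞) H)
    (hG0 : ∀ p : (Fin 2 → ℝ) × ℝ, p.1 ∉ K → G p = 0) (t : ℝ) :
    Integrable (fun x => G (x, t) * H (x, t)) :=
  integrable_slice hK (G := fun p => G p * H p) (hG.continuous.mul hH.continuous)
    (fun p hp => by show G p * H p = 0; rw [hG0 p hp, zero_mul]) t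

lemma ibp {K : Set (Fin 2 → ℝ)} (hK : IsCompact K) {G H : (Fin 2 → ℝ) × ℝ → ℝ}
    (hG : ContDiff ℝ (⊤ : ℕ∞) G) (hH : ContDiff ℝ (⊤ : ℕ∞) H)
    (hG0 : ∀ p : (Fin 2 → ℝ) × ℝ, p.1 ∉ K → G p = 0)
    (hH0 : ∀ p : (Fin 2 → ℝ) × ℝ, p.1 ∉ K → H p = 0) (i : Fin 2) (t : ℝ) :
    ∫ x, G (x, t) * Dd (eS i) H (x, t)
      = -∫ x, Dd (eS i) G (x, t) * H (x, t) := by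
  have e1 : ∀ {F : (Fin 2 → ℝ) × ℝ → ℝ}, ContDiff ℝ (⊤ : ℕ∞) F → ∀ (x : Fin 2 → ℝ),
      fderiv ℝ (fun y => F (y, t)) x (Pi.single i 1) = Dd (eS i) F (x, t) :=
    fun hF x => fderiv_slice hF x t _
  have hGd : Differentiable ℝ (fun y => G (y, t)) :=
    (hG.comp (contDiff_id.prodMk contDiff_const)).differentiable (by simp)
  have hHd : Differentiable ℝ (fun y => H (y, t)) :=
    (hH.comp (contDiff_id.prodMk contDiff_const)).differentiable (by simp)
  have key := integral_mul_fderiv_eq_neg_fderiv_mul_of_integrable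
    (μ := volume) (f := fun y => G (y, t)) (g := fun y => H (y, t)) (v := Pi.single i 1)
    ?_ ?_ ?_ (fun x _ => hGd x) (fun x _ => hHd x)
  · simpa only [e1 hG, e1 hH] using key
  · have := integrable_slice hK (G := fun p => Dd (eS i) G p * H p)
      (((Dd_contDiff hG _).continuous).mul hH.continuous)
      (fun p hp => by show Dd (eS i) G p * H p = 0; rw [Dd_zero_off hK hG0 _ p hp, zero_mul]) t
    simpa only [e1 hG] using this
  · have := integrable_slice hK (G := fun p => G p * Dd (eS i) H p)
      (hG.continuous.mul ((Dd_contDiff hH _).continuous))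
      (fun p hp => by show G p * Dd (eS i) H p = 0; rw [hG0 p hp, zero_mul]) t
    simpa only [e1 hH] using this
  · exact int2 hK hG hH hG0 t

lemma hasDerivAt_integral_slice {K : Set (Fin 2 → ℝ)} (hK : IsCompact K)
    {G G' : (Fin 2 → ℝ) × ℝ → ℝ} (hG : Continuous G) (hG' : Continuous G')
    (h0 : ∀ p : (Fin 2 → ℝ) × ℝ, p.1 ∉ K → G' p = 0)
    (hderiv : ∀ (x : Fin 2 → ℝ) (t : ℝ), HasDerivAt (fun s => G (x, s)) (G' (x, t)) t)
    (hint : ∀ t : ℝ, Integrable (fun x => G (x, t))) (t₀ : ℝ) :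
    HasDerivAt (fun t => ∫ x, G (x, t)) (∫ x, G' (x, t₀)) t₀ := by
  obtain ⟨C, hC⟩ :=
    (hK.prod (isCompact_Icc (a := t₀ - 1) (b := t₀ + 1))).exists_bound_of_continuousOn
      hG'.continuousOn
  set bound : (Fin 2 → ℝ) → ℝ := K.indicator (fun _ => max C 0) with hbound
  have h := hasDerivAt_integral_of_dominated_loc_of_deriv_le (μ := volume) (x₀ := t₀)
    (F := fun t x => G (x, t)) (F' := fun t x => G' (x, t)) (bound := bound)
    (s := Metric.ball t₀ 1) (Metric.ball_mem_nhds t₀ one_pos)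
    (Eventually.of_forall fun t =>
      (hG.comp (continuous_id.prodMk continuous_const)).aestronglyMeasurable)
    (hint t₀)
    ((hG'.comp (continuous_id.prodMk continuous_const)).aestronglyMeasurable)
    (Eventually.of_forall fun x t ht => ?_) ?_
    (Eventually.of_forall fun x t _ => hderiv x t)
  · exact h.2
  · show ‖G' (x, t)‖ ≤ bound x
    by_cases hx : x ∈ K
    · have hmem : (x, t) ∈ K ×ˢ Set.Icc (t₀ - 1) (t₀ + 1) := by
        refine ⟨hx, ?_⟩
        have := Metric.mem_ball.mp ht
        rw [Real.dist_eq] at this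
        constructor <;> [linarith [abs_lt.mp this |>.1]; linarith [abs_lt.mp this |>.2]]
      have := hC (x, t) hmem
      rw [hbound, Set.indicator_of_mem hx]
      exact this.trans (le_max_left _ _)
    · rw [h0 (x, t) hx, hbound, Set.indicator_of_notMem hx]
      simp
  · rw [hbound, integrable_indicator_iff hK.measurableSet]
    exact integrableOn_const hK.measure_lt_top.ne

lemma sum_int (c : Matrix (Fin 2) (Fin 2) ℝ) (f : Fin 2 → Fin 2 → (Fin 2 → ℝ) → ℝ)
    (hf : ∀ i j, Integrable (f i j)) :
    ∫ x, (∑ i, ∑ j, c i j * f i j x) = ∑ i, ∑ j, c i j * ∫ x, f i j x := by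
  rw [integral_finset_sum _ (f := fun i x => ∑ j, c i j * f i j x)
    (fun i _ => integrable_finset_sum _ (fun j _ => (hf i j).const_mul _))]
  refine Finset.sum_congr rfl fun i _ => ?_
  rw [integral_finset_sum _ (f := fun j x => c i j * f i j x) (fun j _ => (hf i j).const_mul _)]
  exact Finset.sum_congr rfl fun j _ => integral_const_mul _ _
/-- Energy conservation for the two-dimensional homogenized equation: for a smooth solution
with fixed compact spatial support, the energy `E(t)` is constant in `t`. -/
theorem stmt_16 (D0 : ℝ) (hD0 : 0 < D0) (N0 D1 : Matrix (Fin 2) (Fin 2) ℝ)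
    (hN0 : N0.IsSymm) (hD1 : D1.IsSymm)
    (u : (Fin 2 → ℝ) → ℝ → ℝ)
    (hu : ContDiff ℝ (⊤ : ℕ∞) (fun p : (Fin 2 → ℝ) × ℝ => u p.1 p.2))
    (K : Set (Fin 2 → ℝ)) (hK : IsCompact K)
    (hsupp : ∀ (t : ℝ) (x : Fin 2 → ℝ), x ∉ K → u x t = 0)
    (hpde : ∀ (x : Fin 2 → ℝ) (t : ℝ),
      - D0 * pdt^[2] u x t
        + (∑ i, ∑ j, D1 i j * pd i (pd j (pdt^[2] u)) x t)
        + (∑ i, ∑ j, N0 i j * pd i (pd j u) x t) = 0)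
    (E : ℝ → ℝ)
    (hE : E = fun t => (1/2) * ∫ x : Fin 2 → ℝ,
      (D0 * (pdt u x t) ^ 2
        + (∑ i, ∑ j, N0 i j * pd i u x t * pd j u x t)
        + (∑ i, ∑ j, D1 i j * pd i (pdt u) x t * pd j (pdt u) x t))) :
    ∀ t₁ t₂ : ℝ, E t₁ = E t₂ := by
  set F : (Fin 2 → ℝ) × ℝ → ℝ := fun p => u p.1 p.2 with hFdef
  have hF : ContDiff ℝ (⊤ : ℕ∞) F := hu
  have hF0 : ∀ p : (Fin 2 → ℝ) × ℝ, p.1 ∉ K → F p = 0 := fun p hp => hsupp p.2 p.1 hp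
  -- smoothness of iterated derivatives
  have cA : ContDiff ℝ (⊤ : ℕ∞) (Dd eT F) := Dd_contDiff hF eT
  have cB : ContDiff ℝ (⊤ : ℕ∞) (Dd eT (Dd eT F)) := Dd_contDiff cA eT
  have cP : ∀ i, ContDiff ℝ (⊤ : ℕ∞) (Dd (eS i) F) := fun i => Dd_contDiff hF _
  have cQ : ∀ i, ContDiff ℝ (⊤ : ℕ∞) (Dd (eS i) (Dd eT F)) := fun i => Dd_contDiff cA _
  have cR : ∀ i, ContDiff ℝ (⊤ : ℕ∞) (Dd (eS i) (Dd eT (Dd eT F))) := fun i => Dd_contDiff cB _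
  have cS : ∀ i j, ContDiff ℝ (⊤ : ℕ∞) (Dd (eS i) (Dd (eS j) F)) := fun i j => Dd_contDiff (cP j) _
  have cT : ∀ i j, ContDiff ℝ (⊤ : ℕ∞) (Dd (eS i) (Dd (eS j) (Dd eT (Dd eT F)))) :=
    fun i j => Dd_contDiff (cR j) _
  -- vanishing off K
  have zA : ∀ p : (Fin 2 → ℝ) × ℝ, p.1 ∉ K → Dd eT F p = 0 := Dd_zero_off hK hF0 eT
  have zB : ∀ p : (Fin 2 → ℝ) × ℝ, p.1 ∉ K → Dd eT (Dd eT F) p = 0 := Dd_zero_off hK zA eT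
  have zP : ∀ i (p : (Fin 2 → ℝ) × ℝ), p.1 ∉ K → Dd (eS i) F p = 0 :=
    fun i => Dd_zero_off hK hF0 _
  have zQ : ∀ i (p : (Fin 2 → ℝ) × ℝ), p.1 ∉ K → Dd (eS i) (Dd eT F) p = 0 :=
    fun i => Dd_zero_off hK zA _
  have zR : ∀ i (p : (Fin 2 → ℝ) × ℝ), p.1 ∉ K → Dd (eS i) (Dd eT (Dd eT F)) p = 0 :=
    fun i => Dd_zero_off hK zB _
  -- rewriting pd/pdt into Dd form
  have L1 : ∀ i, pd i u = fun x t => Dd (eS i) F (x, t) := fun i => pd_curry i hF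
  have L2 : ∀ i j, pd i (fun x t => Dd (eS j) F (x, t))
      = fun x t => Dd (eS i) (Dd (eS j) F) (x, t) := fun i j => pd_curry i (cP j)
  have L3 : pdt u = fun x t => Dd eT F (x, t) := pdt_curry hF
  have L7 : ∀ i, pd i (fun x t => Dd eT F (x, t))
      = fun x t => Dd (eS i) (Dd eT F) (x, t) := fun i => pd_curry i cA
  have h_pdt2 : pdt^[2] u = fun x t => Dd eT (Dd eT F) (x, t) := by
    have h : pdt^[2] u = pdt (pdt u) := by
      rw [Function.iterate_succ_apply', Function.iterate_one]
    rw [h, L3, pdt_curry cA]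
  have L5 : ∀ j, pd j (fun x t => Dd eT (Dd eT F) (x, t))
      = fun x t => Dd (eS j) (Dd eT (Dd eT F)) (x, t) := fun j => pd_curry j cB
  have L6 : ∀ i j, pd i (fun x t => Dd (eS j) (Dd eT (Dd eT F)) (x, t))
      = fun x t => Dd (eS i) (Dd (eS j) (Dd eT (Dd eT F))) (x, t) :=
    fun i j => pd_curry i (cR j)
  simp only [h_pdt2, L5, L6, L1, L2] at hpde
  simp only [L3, L1, L7] at hE
  -- slice derivative of the energy density
  have hd : ∀ (x : Fin 2 → ℝ) (t : ℝ), HasDerivAt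
      (fun s => D0 * Dd eT F (x, s) ^ 2
        + (∑ i, ∑ j, N0 i j * Dd (eS i) F (x, s) * Dd (eS j) F (x, s))
        + (∑ i, ∑ j, D1 i j * Dd (eS i) (Dd eT F) (x, s) * Dd (eS j) (Dd eT F) (x, s)))
      (2 * (D0 * (Dd eT F (x, t) * Dd eT (Dd eT F) (x, t))
        + (∑ i, ∑ j, N0 i j * (Dd (eS i) (Dd eT F) (x, t) * Dd (eS j) F (x, t)))
        + (∑ i, ∑ j, D1 i j * (Dd (eS i) (Dd eT (Dd eT F)) (x, t) * Dd (eS j) (Dd eT F) (x, t))))) t := by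
    intro x t
    have hP := fun i => hasDerivAt_slice (cP i) x t
    have hQ := fun i => hasDerivAt_slice (cQ i) x t
    have H := ((((hasDerivAt_slice cA x t).pow 2).const_mul D0).add
      (HasDerivAt.sum (u := Finset.univ) (fun i _ => HasDerivAt.sum (u := Finset.univ) (fun j _ =>
        ((hP i).const_mul (N0 i j)).mul (hP j))))).add
      (HasDerivAt.sum (u := Finset.univ) (fun i _ => HasDerivAt.sum (u := Finset.univ) (fun j _ =>
        ((hQ i).const_mul (D1 i j)).mul (hQ j))))
    convert H using 1
    · rfl
    · rfl
    · funext s; simp [Finset.sum_apply]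
    have c1 : ∀ i, Dd eT (Dd (eS i) F) = Dd (eS i) (Dd eT F) := fun i => Dd_comm hF _ _
    have c2 : ∀ i, Dd eT (Dd (eS i) (Dd eT F)) = Dd (eS i) (Dd eT (Dd eT F)) :=
      fun i => Dd_comm cA _ _
    simp only [c1, c2, Fin.sum_univ_two, hN0.apply 0 1, hD1.apply 0 1]
    push_cast
    ring
  -- the derivative of the energy integrand integrates to zero
  have hzero : ∀ t : ℝ, ∫ x, (2 * (D0 * (Dd eT F (x, t) * Dd eT (Dd eT F) (x, t))
      + (∑ i, ∑ j, N0 i j * (Dd (eS i) (Dd eT F) (x, t) * Dd (eS j) F (x, t)))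
      + (∑ i, ∑ j, D1 i j * (Dd (eS i) (Dd eT (Dd eT F)) (x, t) * Dd (eS j) (Dd eT F) (x, t))))) = 0 := by
    intro t
    have iAB : Integrable (fun x => Dd eT F (x, t) * Dd eT (Dd eT F) (x, t)) := int2 hK cA cB zA t
    have iQP : ∀ i j, Integrable (fun x => Dd (eS i) (Dd eT F) (x, t) * Dd (eS j) F (x, t)) :=
      fun i j => int2 hK (cQ i) (cP j) (zQ i) t
    have iRQ : ∀ i j, Integrable
        (fun x => Dd (eS i) (Dd eT (Dd eT F)) (x, t) * Dd (eS j) (Dd eT F) (x, t)) :=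
      fun i j => int2 hK (cR i) (cQ j) (zR i) t
    have iAT : ∀ i j, Integrable
        (fun x => Dd eT F (x, t) * Dd (eS i) (Dd (eS j) (Dd eT (Dd eT F))) (x, t)) :=
      fun i j => int2 hK cA (cT i j) zA t
    have iAS : ∀ i j, Integrable (fun x => Dd eT F (x, t) * Dd (eS i) (Dd (eS j) F) (x, t)) :=
      fun i j => int2 hK cA (cS i j) zA t
    have iX : Integrable (fun x => D0 * (Dd eT F (x, t) * Dd eT (Dd eT F) (x, t))) :=
      iAB.const_mul D0
    have iY : Integrable (fun x =>
        ∑ i, ∑ j, N0 i j * (Dd (eS i) (Dd eT F) (x, t) * Dd (eS j) F (x, t))) :=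
      integrable_finset_sum _ fun i _ =>
        integrable_finset_sum _ fun j _ => (iQP i j).const_mul _
    have iZ : Integrable (fun x =>
        ∑ i, ∑ j, D1 i j * (Dd (eS i) (Dd eT (Dd eT F)) (x, t) * Dd (eS j) (Dd eT F) (x, t))) :=
      integrable_finset_sum _ fun i _ =>
        integrable_finset_sum _ fun j _ => (iRQ i j).const_mul _
    have iXY : Integrable (fun x => D0 * (Dd eT F (x, t) * Dd eT (Dd eT F) (x, t))
        + ∑ i, ∑ j, N0 i j * (Dd (eS i) (Dd eT F) (x, t) * Dd (eS j) F (x, t))) := iX.add iY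
    rw [integral_const_mul,
      integral_add iXY iZ,
      integral_add iX iY,
      integral_const_mul,
      sum_int N0 (fun i j x => Dd (eS i) (Dd eT F) (x, t) * Dd (eS j) F (x, t)) iQP,
      sum_int D1 (fun i j x => Dd (eS i) (Dd eT (Dd eT F)) (x, t) * Dd (eS j) (Dd eT F) (x, t)) iRQ]
    have hkey : (0:ℝ) = -(D0 * ∫ x, Dd eT F (x, t) * Dd eT (Dd eT F) (x, t))
        + (∑ i, ∑ j, D1 i j * ∫ x, Dd eT F (x, t) * Dd (eS i) (Dd (eS j) (Dd eT (Dd eT F))) (x, t))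
        + (∑ i, ∑ j, N0 i j * ∫ x, Dd eT F (x, t) * Dd (eS i) (Dd (eS j) F) (x, t)) := by
      have e0 : ∀ x : Fin 2 → ℝ,
          -(D0 * (Dd eT F (x, t) * Dd eT (Dd eT F) (x, t)))
          + (∑ i, ∑ j, D1 i j * (Dd eT F (x, t) * Dd (eS i) (Dd (eS j) (Dd eT (Dd eT F))) (x, t)))
          + (∑ i, ∑ j, N0 i j * (Dd eT F (x, t) * Dd (eS i) (Dd (eS j) F) (x, t)))
          = Dd eT F (x, t) * (-D0 * Dd eT (Dd eT F) (x, t)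
            + (∑ i, ∑ j, D1 i j * Dd (eS i) (Dd (eS j) (Dd eT (Dd eT F))) (x, t))
            + (∑ i, ∑ j, N0 i j * Dd (eS i) (Dd (eS j) F) (x, t))) := by
        intro x; simp only [Fin.sum_univ_two]; ring
      have hz : ∫ x, (-(D0 * (Dd eT F (x, t) * Dd eT (Dd eT F) (x, t)))
          + (∑ i, ∑ j, D1 i j * (Dd eT F (x, t) * Dd (eS i) (Dd (eS j) (Dd eT (Dd eT F))) (x, t)))
          + (∑ i, ∑ j, N0 i j * (Dd eT F (x, t) * Dd (eS i) (Dd (eS j) F) (x, t)))) = 0 := by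
        simp only [e0, hpde, mul_zero, integral_zero]
      have iX' : Integrable (fun x => -(D0 * (Dd eT F (x, t) * Dd eT (Dd eT F) (x, t)))) :=
        (iAB.const_mul D0).neg
      have iY' : Integrable (fun x =>
          ∑ i, ∑ j, D1 i j * (Dd eT F (x, t) * Dd (eS i) (Dd (eS j) (Dd eT (Dd eT F))) (x, t))) :=
        integrable_finset_sum _ fun i _ =>
          integrable_finset_sum _ fun j _ => (iAT i j).const_mul _
      have iZ' : Integrable (fun x =>
          ∑ i, ∑ j, N0 i j * (Dd eT F (x, t) * Dd (eS i) (Dd (eS j) F) (x, t))) :=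
        integrable_finset_sum _ fun i _ =>
          integrable_finset_sum _ fun j _ => (iAS i j).const_mul _
      have iXY' : Integrable (fun x => -(D0 * (Dd eT F (x, t) * Dd eT (Dd eT F) (x, t)))
          + ∑ i, ∑ j, D1 i j * (Dd eT F (x, t) * Dd (eS i) (Dd (eS j) (Dd eT (Dd eT F))) (x, t))) :=
        iX'.add iY'
      rw [integral_add iXY' iZ',
        integral_add iX' iY',
        integral_neg, integral_const_mul,
        sum_int D1 (fun i j x => Dd eT F (x, t) * Dd (eS i) (Dd (eS j) (Dd eT (Dd eT F))) (x, t)) iAT,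
        sum_int N0 (fun i j x => Dd eT F (x, t) * Dd (eS i) (Dd (eS j) F) (x, t)) iAS] at hz
      exact hz.symm
    have ibpS : ∀ i j, ∫ x, Dd eT F (x, t) * Dd (eS i) (Dd (eS j) F) (x, t)
        = -∫ x, Dd (eS i) (Dd eT F) (x, t) * Dd (eS j) F (x, t) :=
      fun i j => ibp hK cA (cP j) zA (zP j) i t
    have ibpT : ∀ i j, ∫ x, Dd eT F (x, t) * Dd (eS i) (Dd (eS j) (Dd eT (Dd eT F))) (x, t)
        = -∫ x, Dd (eS i) (Dd eT F) (x, t) * Dd (eS j) (Dd eT (Dd eT F)) (x, t) :=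
      fun i j => ibp hK cA (cR j) zA (zR j) i t
    simp only [ibpS, ibpT, mul_neg, Finset.sum_neg_distrib] at hkey
    have hsw : (∑ i, ∑ j, D1 i j *
          ∫ x, Dd (eS i) (Dd eT (Dd eT F)) (x, t) * Dd (eS j) (Dd eT F) (x, t))
        = ∑ i, ∑ j, D1 i j *
          ∫ x, Dd (eS i) (Dd eT F) (x, t) * Dd (eS j) (Dd eT (Dd eT F)) (x, t) := by
      rw [Finset.sum_comm]
      refine Finset.sum_congr rfl fun a _ => Finset.sum_congr rfl fun b _ => ?_
      have e : (fun x => Dd (eS b) (Dd eT (Dd eT F)) (x, t) * Dd (eS a) (Dd eT F) (x, t))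
          = fun x => Dd (eS a) (Dd eT F) (x, t) * Dd (eS b) (Dd eT (Dd eT F)) (x, t) :=
        funext fun x => mul_comm _ _
      rw [hD1.apply a b, e]
    linarith [hkey, hsw]
  -- continuity of the integrands
  have contG0 : Continuous (fun p : (Fin 2 → ℝ) × ℝ => D0 * Dd eT F p ^ 2
      + (∑ i, ∑ j, N0 i j * Dd (eS i) F p * Dd (eS j) F p)
      + (∑ i, ∑ j, D1 i j * Dd (eS i) (Dd eT F) p * Dd (eS j) (Dd eT F) p)) := by
    refine ((continuous_const.mul (cA.continuous.pow 2)).add ?_).add ?_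
    · exact continuous_finset_sum _ fun i _ => continuous_finset_sum _ fun j _ =>
        (continuous_const.mul (cP i).continuous).mul (cP j).continuous
    · exact continuous_finset_sum _ fun i _ => continuous_finset_sum _ fun j _ =>
        (continuous_const.mul (cQ i).continuous).mul (cQ j).continuous
  have contG' : Continuous (fun p : (Fin 2 → ℝ) × ℝ =>
      2 * (D0 * (Dd eT F p * Dd eT (Dd eT F) p)
      + (∑ i, ∑ j, N0 i j * (Dd (eS i) (Dd eT F) p * Dd (eS j) F p))
      + (∑ i, ∑ j, D1 i j * (Dd (eS i) (Dd eT (Dd eT F)) p * Dd (eS j) (Dd eT F) p)))) := by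
    refine continuous_const.mul (((continuous_const.mul
      (cA.continuous.mul cB.continuous)).add ?_).add ?_)
    · exact continuous_finset_sum _ fun i _ => continuous_finset_sum _ fun j _ =>
        continuous_const.mul ((cQ i).continuous.mul (cP j).continuous)
    · exact continuous_finset_sum _ fun i _ => continuous_finset_sum _ fun j _ =>
        continuous_const.mul ((cR i).continuous.mul (cQ j).continuous)
  have vG0 : ∀ p : (Fin 2 → ℝ) × ℝ, p.1 ∉ K → (D0 * Dd eT F p ^ 2
      + (∑ i, ∑ j, N0 i j * Dd (eS i) F p * Dd (eS j) F p)
      + (∑ i, ∑ j, D1 i j * Dd (eS i) (Dd eT F) p * Dd (eS j) (Dd eT F) p)) = 0 := by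
    intro p hp
    simp [Fin.sum_univ_two, zA p hp, zP 0 p hp, zP 1 p hp, zQ 0 p hp, zQ 1 p hp]
  have vG' : ∀ p : (Fin 2 → ℝ) × ℝ, p.1 ∉ K →
      (2 * (D0 * (Dd eT F p * Dd eT (Dd eT F) p)
      + (∑ i, ∑ j, N0 i j * (Dd (eS i) (Dd eT F) p * Dd (eS j) F p))
      + (∑ i, ∑ j, D1 i j * (Dd (eS i) (Dd eT (Dd eT F)) p * Dd (eS j) (Dd eT F) p)))) = 0 := by
    intro p hp
    simp [Fin.sum_univ_two, zA p hp, zQ 0 p hp, zQ 1 p hp, zR 0 p hp, zR 1 p hp]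
  have hint : ∀ t : ℝ, Integrable (fun x => D0 * Dd eT F (x, t) ^ 2
      + (∑ i, ∑ j, N0 i j * Dd (eS i) F (x, t) * Dd (eS j) F (x, t))
      + (∑ i, ∑ j, D1 i j * Dd (eS i) (Dd eT F) (x, t) * Dd (eS j) (Dd eT F) (x, t))) :=
    fun t => integrable_slice hK contG0 vG0 t
  have hI : ∀ t₀ : ℝ, HasDerivAt (fun t => ∫ x, (D0 * Dd eT F (x, t) ^ 2
      + (∑ i, ∑ j, N0 i j * Dd (eS i) F (x, t) * Dd (eS j) F (x, t))
      + (∑ i, ∑ j, D1 i j * Dd (eS i) (Dd eT F) (x, t) * Dd (eS j) (Dd eT F) (x, t))))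
      (∫ x, (2 * (D0 * (Dd eT F (x, t₀) * Dd eT (Dd eT F) (x, t₀))
      + (∑ i, ∑ j, N0 i j * (Dd (eS i) (Dd eT F) (x, t₀) * Dd (eS j) F (x, t₀)))
      + (∑ i, ∑ j, D1 i j * (Dd (eS i) (Dd eT (Dd eT F)) (x, t₀) * Dd (eS j) (Dd eT F) (x, t₀)))))) t₀ :=
    fun t₀ => hasDerivAt_integral_slice
      (G := fun p => D0 * Dd eT F p ^ 2
        + (∑ i, ∑ j, N0 i j * Dd (eS i) F p * Dd (eS j) F p)
        + (∑ i, ∑ j, D1 i j * Dd (eS i) (Dd eT F) p * Dd (eS j) (Dd eT F) p))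
      (G' := fun p => 2 * (D0 * (Dd eT F p * Dd eT (Dd eT F) p)
        + (∑ i, ∑ j, N0 i j * (Dd (eS i) (Dd eT F) p * Dd (eS j) F p))
        + (∑ i, ∑ j, D1 i j * (Dd (eS i) (Dd eT (Dd eT F)) p * Dd (eS j) (Dd eT F) p))))
      hK contG0 contG' vG' hd hint t₀
  have hE0 : ∀ t₀ : ℝ, HasDerivAt E 0 t₀ := by
    intro t₀
    rw [hE]
    have h := (hI t₀).const_mul (1/2 : ℝ)
    rw [hzero t₀, mul_zero] at h
    exact h
  exact fun t₁ t₂ => is_const_of_deriv_eq_zero (fun t => (hE0 t).differentiableAt)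
    (fun t => (hE0 t).deriv) t₁ t₂
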